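/- arXiv:1707.04047 — 8 statements merged into one kernel-verified Lean document; each statement's English description precedes it below -/
import Mathlib

section
/- (Lemma 1) If the similarity function g is nonnegative (g u w ≥ 0 for all u, w), then h is a submodular set function: for all finite subsets V₁ ⊆ V₂ of ι and every v ∉ V₂, h(V₁ ∪ {v}) − h(V₁) ≥ h(V₂ ∪ {v}) − h(V₂). -/
open Finset

/-- Representativeness of a view set `V`: total similarity of its members to
all other elements of the ground set. -/
noncomputable def repSet {ι : Type*} [Fintype ι] [DecidableEq ι]
    (g : ι → ι → ℝ) (V : Finset ι) : ℝ :=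
  ∑ v ∈ V, ∑ w ∈ Finset.univ.filter (fun w => w ≠ v), g v w

/-- Redundancy of a view set `V`: total similarity among its own members. -/
noncomputable def redSet {ι : Type*} [Fintype ι] [DecidableEq ι]
    (g : ι → ι → ℝ) (V : Finset ι) : ℝ :=
  ∑ v ∈ V, ∑ w ∈ V.filter (fun w => w ≠ v), g v w

/-- The canonical-view mining objective `h(V) = Rep(V) − Red(V)`. -/
noncomputable def objH {ι : Type*} [Fintype ι] [DecidableEq ι]
    (g : ι → ι → ℝ) (V : Finset ι) : ℝ :=
  repSet g V - redSet g V

section Insert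

variable {ι : Type*} [Fintype ι] [DecidableEq ι] (g : ι → ι → ℝ) {V : Finset ι} {v : ι}

theorem repSet_insert (hv : v ∉ V) :
    repSet g (insert v V) = repSet g V + ∑ w ∈ univ.erase v, g v w := by
  simp only [repSet, filter_ne']
  rw [sum_insert hv, add_comm]

theorem redSet_insert (hv : v ∉ V) :
    redSet g (insert v V) = redSet g V + ∑ w ∈ V, (g v w + g w v) := by
  have hrow : ∀ x ∈ V, ∑ w ∈ (insert v V).erase x, g x w = g x v + ∑ w ∈ V.erase x, g x w := by
    intro x hx
    have hxv : x ≠ v := ne_of_mem_of_not_mem hx hv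
    rw [erase_insert_of_ne hxv.symm, sum_insert (fun h => hv (mem_of_mem_erase h))]
  simp only [redSet, filter_ne']
  rw [sum_insert hv, erase_insert hv, sum_congr rfl hrow, sum_add_distrib, sum_add_distrib]
  ring

theorem objH_insert_sub (hv : v ∉ V) :
    objH g (insert v V) - objH g V = ∑ w ∈ univ.erase v, g v w - ∑ w ∈ V, (g v w + g w v) := by
  simp only [objH, repSet_insert g hv, redSet_insert g hv]
  ring

end Insert

theorem objH_submodular {ι : Type*} [Fintype ι] [DecidableEq ι]
    (g : ι → ι → ℝ) (hg : ∀ u w, 0 ≤ g u w)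
    (V₁ V₂ : Finset ι) (hsub : V₁ ⊆ V₂) (v : ι) (hv : v ∉ V₂) :
    objH g (insert v V₂) - objH g V₂ ≤ objH g (insert v V₁) - objH g V₁ := by
  rw [objH_insert_sub g hv, objH_insert_sub g (fun h => hv (hsub h))]
  gcongr ?_ - ?_
  exact sum_le_sum_of_subset_of_nonneg hsub fun w _ _ => add_nonneg (hg v w) (hg w v)
end

section
/- (Lemma 2) Let V₁ ⊆ V₂ be finite subsets of ι. If Σ_{u ∈ V₁} Σ_{w ∈ V₂ \ V₁} g u w ≤ Σ_{u ∈ V₂ \ V₁} Σ_{w ∉ V₂} g u w (the paper's 'small canonical set' condition, automatic in their regime |V₁|, |V₂| ≪ |ι|), then h(V₁) ≤ h(V₂). -/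
open Finset

/-! `h(V)` is the weight of the cut between `V` and its complement: the redundancy term removes
exactly the pairs inside `V` from the representativeness, and the excluded diagonal terms
`g v v` cancel. Enlarging `V₁` to `V₂` therefore loses the edges from `V₁` to `V₂ \ V₁` and
gains those from `V₂ \ V₁` to `V₂ᶜ`, and the hypothesis says the gain is at least the loss. -/

theorem objH_eq_sum_sum_compl {ι : Type*} [Fintype ι] [DecidableEq ι]
    (g : ι → ι → ℝ) (V : Finset ι) :
    objH g V = ∑ v ∈ V, ∑ w ∈ Vᶜ, g v w := by
  rw [objH, repSet, redSet, ← sum_sub_distrib]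
  refine sum_congr rfl fun v hv => ?_
  rw [filter_ne', filter_ne', sum_erase_eq_sub (mem_univ v), sum_erase_eq_sub hv,
    compl_eq_univ_sdiff, sum_sdiff_eq_sub (subset_univ V)]
  ring

theorem objH_add_sum_sum_sdiff_compl {ι : Type*} [Fintype ι] [DecidableEq ι]
    (g : ι → ι → ℝ) {V₁ V₂ : Finset ι} (hsub : V₁ ⊆ V₂) :
    objH g V₁ + ∑ u ∈ V₂ \ V₁, ∑ w ∈ V₂ᶜ, g u w
      = objH g V₂ + ∑ u ∈ V₁, ∑ w ∈ V₂ \ V₁, g u w := by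
  have hcompl : V₁ᶜ = V₂ᶜ ∪ (V₂ \ V₁) := by
    rw [← compl_sdiff_compl, union_sdiff_of_subset (compl_subset_compl.mpr hsub)]
  have hdisj : Disjoint V₂ᶜ (V₂ \ V₁) := disjoint_compl_left.mono_right sdiff_subset
  rw [objH_eq_sum_sum_compl, objH_eq_sum_sum_compl, ← sum_sdiff hsub]
  simp only [hcompl, sum_union hdisj, sum_add_distrib]
  ring

theorem objH_monotone_of_small {ι : Type*} [Fintype ι] [DecidableEq ι]
    (g : ι → ι → ℝ) (V₁ V₂ : Finset ι) (hsub : V₁ ⊆ V₂)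
    (hsmall : ∑ u ∈ V₁, ∑ w ∈ V₂ \ V₁, g u w
        ≤ ∑ u ∈ V₂ \ V₁, ∑ w ∈ V₂ᶜ, g u w) :
    objH g V₁ ≤ objH g V₂ := by
  linarith [objH_add_sum_sum_sdiff_compl g hsub]
end

section
/- (Theorem 1, greedy guarantee) Let α be a finite type, T ≤ card α a natural number, and f : Finset α → ℝ a set function with f(∅) = 0 that is monotone nondecreasing (S ⊆ S' implies f(S) ≤ f(S')) and submodular (f(S ∪ {v}) − f(S) ≥ f(S' ∪ {v}) − f(S') whenever S ⊆ S' and v ∉ S'). Let S : ℕ → Finset α be a greedy sequence: S 0 = ∅ and for each t < T there exists v_t ∉ S t such that S (t+1) = S t ∪ {v_t} and f(S t ∪ {v_t}) ≥ f(S t ∪ {u}) for every u ∈ α. Then for every A ⊆ α with card A = T, f(S T) ≥ (1 − 1/e) · f(A), where e = exp 1. -/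
/-!
Let `A` be any set of size `T`. Monotonicity and submodularity bound `f A - f (S t)` by the sum
of the marginal gains of the elements of `A` at `S t`, each of which is at most the greedy gain.
So every greedy step closes at least a `1/T` fraction of the gap `f A - f (S t)`, which after `T`
steps is at most `(1 - 1/T)^T f A ≤ f A / e`.
-/

open Finset

section

variable {α : Type*} [DecidableEq α]

def IsSubmodular (f : Finset α → ℝ) : Prop :=
  ∀ S S' : Finset α, S ⊆ S' → ∀ v ∉ S', f (insert v S') - f S' ≤ f (insert v S) - f S

namespace IsSubmodular

variable {f : Finset α → ℝ}

theorem le_add_sum_marginal (hmono : Monotone f) (hsub : IsSubmodular f) (W B : Finset α) :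
    f (W ∪ B) ≤ f W + ∑ v ∈ B, (f (insert v W) - f W) := by
  induction B using Finset.induction_on with
  | empty => simp
  | @insert v B hvB ih =>
    rw [sum_insert hvB, union_insert]
    by_cases hv : v ∈ W ∪ B
    · have : f W ≤ f (insert v W) := hmono (subset_insert v W)
      rw [insert_eq_of_mem hv]
      linarith
    · have := hsub W (W ∪ B) subset_union_left v hv
      linarith

theorem sub_le_card_mul_of_marginal_le (hmono : Monotone f) (hsub : IsSubmodular f)
    {W A : Finset α} {δ : ℝ} (hδ : ∀ u ∈ A, f (insert u W) - f W ≤ δ) :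
    f A - f W ≤ #A * δ :=
  calc f A - f W ≤ f (W ∪ A) - f W := by gcongr; exact hmono subset_union_right
    _ ≤ ∑ u ∈ A, (f (insert u W) - f W) := by linarith [hsub.le_add_sum_marginal hmono W A]
    _ ≤ ∑ _u ∈ A, δ := sum_le_sum hδ
    _ = #A * δ := by rw [sum_const, nsmul_eq_mul]

theorem sub_le_one_sub_inv_card_mul (hmono : Monotone f) (hsub : IsSubmodular f)
    {W W' A : Finset α} (hA : A.Nonempty) (hW' : ∀ u ∈ A, f (insert u W) ≤ f W') :
    f A - f W' ≤ (1 - 1 / #A) * (f A - f W) := by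
  have hcard : (0 : ℝ) < #A := by exact_mod_cast hA.card_pos
  have hgap : f A - f W ≤ #A * (f W' - f W) :=
    hsub.sub_le_card_mul_of_marginal_le hmono fun u hu => by linarith [hW' u hu]
  have hfrac : (f A - f W) / #A ≤ f W' - f W := by rwa [div_le_iff₀' hcard]
  calc f A - f W' ≤ (f A - f W) - (f A - f W) / #A := by linarith
    _ = (1 - 1 / #A) * (f A - f W) := by ring

end IsSubmodular

end

theorem greedy_submodular_guarantee_general {α : Type*} [DecidableEq α]
    (T : ℕ)
    (f : Finset α → ℝ)
    (hempty : f ∅ = 0)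
    (hmono : ∀ S S' : Finset α, S ⊆ S' → f S ≤ f S')
    (hsubmod : ∀ S S' : Finset α, S ⊆ S' → ∀ v ∉ S',
      f (insert v S') - f S' ≤ f (insert v S) - f S)
    (S : ℕ → Finset α)
    (hS0 : S 0 = ∅)
    (hgreedy : ∀ t < T, ∃ v ∉ S t, S (t + 1) = insert v (S t) ∧
      ∀ u : α, f (insert u (S t)) ≤ f (insert v (S t))) :
    ∀ A : Finset α, A.card = T → (1 - 1 / Real.exp 1) * f A ≤ f (S T) := by
  intro A hA
  obtain rfl | hApos := A.eq_empty_or_nonempty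
  · subst hA
    simp [hS0, hempty]
  have hmono' : Monotone f := fun S S' h => hmono S S' h
  have hfA : 0 ≤ f A := hempty ▸ hmono ∅ A (empty_subset A)
  have hT : (1 : ℝ) ≤ T := by exact_mod_cast hA ▸ hApos.card_pos
  have hstep : ∀ t < T, f A - f (S (t + 1)) ≤ (1 - 1 / T) * (f A - f (S t)) := by
    intro t ht
    obtain ⟨v, -, hSt, hbest⟩ := hgreedy t ht
    rw [← hA]
    exact IsSubmodular.sub_le_one_sub_inv_card_mul hmono' hsubmod hApos fun u _ => hSt ▸ hbest u
  have hgap : f A - f (S T) ≤ (1 - 1 / T) ^ T * f A := by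
    simpa [hS0, hempty] using le_geom (u := fun t => f A - f (S t))
      (sub_nonneg.2 (div_le_one_of_le₀ hT T.cast_nonneg)) T hstep
  have hexp : (1 - 1 / (T : ℝ)) ^ T ≤ 1 / Real.exp 1 := by
    rw [one_div (Real.exp 1), ← Real.exp_neg]
    exact Real.one_sub_div_pow_le_exp_neg hT
  linarith [mul_le_mul_of_nonneg_right hexp hfA]

theorem greedy_submodular_guarantee {α : Type*} [Fintype α] [DecidableEq α]
    (T : ℕ) (hT : T ≤ Fintype.card α)
    (f : Finset α → ℝ)
    (hempty : f ∅ = 0)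
    (hmono : ∀ S S' : Finset α, S ⊆ S' → f S ≤ f S')
    (hsubmod : ∀ S S' : Finset α, S ⊆ S' → ∀ v ∉ S',
      f (insert v S') - f S' ≤ f (insert v S) - f S)
    (S : ℕ → Finset α)
    (hS0 : S 0 = ∅)
    (hgreedy : ∀ t < T, ∃ v ∉ S t, S (t + 1) = insert v (S t) ∧
      ∀ u : α, f (insert u (S t)) ≤ f (insert v (S t))) :
    ∀ A : Finset α, A.card = T → (1 - 1 / Real.exp 1) * f A ≤ f (S T) :=
  greedy_submodular_guarantee_general T f hempty hmono hsubmod S hS0 hgreedy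
end

section
/- (U-update closed form) Let n be a positive natural number and let V be a real c × n matrix satisfying V Vᵀ = n • I_c. Then for every real d × n matrix B, the matrix U* = (1/n) • B Vᵀ minimizes U ↦ ‖B − U V‖_F²: for every real d × c matrix U, ‖B − U* V‖_F² ≤ ‖B − U V‖_F². -/
/-! The residual `E = B - U* V` satisfies the normal equation `E Vᵀ = 0`, so for any `U` the
matrix `B - U V = E + (U* - U) V` splits into two Frobenius-orthogonal parts, and Pythagoras gives
`‖B - U V‖² = ‖E‖² + ‖(U* - U) V‖² ≥ ‖E‖²`. -/

open Matrix

/-- Squared Frobenius norm of a real matrix: the sum of squares of its entries. -/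
noncomputable def frobSq {m n : Type*} [Fintype m] [Fintype n]
    (A : Matrix m n ℝ) : ℝ :=
  ∑ i, ∑ j, (A i j) ^ 2

section Frobenius

variable {k m n : Type*} [Fintype k] [Fintype m] [Fintype n]

lemma frobSq_eq_trace (A : Matrix m n ℝ) : frobSq A = (A * Aᵀ).trace := by
  simp [frobSq, trace, mul_apply, sq]

lemma frobSq_nonneg (A : Matrix m n ℝ) : 0 ≤ frobSq A :=
  Finset.sum_nonneg fun _ _ => Finset.sum_nonneg fun _ _ => sq_nonneg _

lemma frobSq_add (A C : Matrix m n ℝ) :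
    frobSq (A + C) = frobSq A + 2 * (A * Cᵀ).trace + frobSq C := by
  simp only [frobSq_eq_trace, transpose_add, Matrix.add_mul, Matrix.mul_add, trace_add]
  rw [← trace_transpose (C * Aᵀ), transpose_mul, transpose_transpose]
  ring

lemma frobSq_add_of_mul_transpose_eq_zero {A C : Matrix m n ℝ} (h : A * Cᵀ = 0) :
    frobSq (A + C) = frobSq A + frobSq C := by
  rw [frobSq_add, h, trace_zero, mul_zero, add_zero]

lemma frobSq_sub_mul_le_of_mul_transpose_eq_zero {B : Matrix m n ℝ} {V : Matrix k n ℝ}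
    {U₀ : Matrix m k ℝ} (hU₀ : (B - U₀ * V) * Vᵀ = 0) (U : Matrix m k ℝ) :
    frobSq (B - U₀ * V) ≤ frobSq (B - U * V) := by
  have hsplit : B - U * V = (B - U₀ * V) + (U₀ - U) * V := by
    rw [Matrix.sub_mul]; abel
  have horth : (B - U₀ * V) * ((U₀ - U) * V)ᵀ = 0 := by
    rw [transpose_mul, ← Matrix.mul_assoc, hU₀, Matrix.zero_mul]
  rw [hsplit, frobSq_add_of_mul_transpose_eq_zero horth]
  linarith [frobSq_nonneg ((U₀ - U) * V)]

end Frobenius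

lemma sub_inv_smul_mul_transpose_mul_mul_transpose_eq_zero {k m n : Type*} [Fintype k]
    [Fintype n] [DecidableEq k] {s : ℝ} (hs : s ≠ 0) {V : Matrix k n ℝ}
    (hV : V * Vᵀ = s • (1 : Matrix k k ℝ)) (B : Matrix m n ℝ) :
    (B - (s⁻¹ • (B * Vᵀ)) * V) * Vᵀ = 0 := by
  rw [Matrix.sub_mul, smul_mul, smul_mul, Matrix.mul_assoc, hV, Matrix.mul_smul, Matrix.mul_one,
    smul_smul, inv_mul_cancel₀ hs, one_smul, sub_self]

theorem U_update_closed_form {d c n : ℕ} (hn : 0 < n)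
    (V : Matrix (Fin c) (Fin n) ℝ)
    (hV : V * Vᵀ = (n : ℝ) • (1 : Matrix (Fin c) (Fin c) ℝ))
    (B : Matrix (Fin d) (Fin n) ℝ)
    (Ustar : Matrix (Fin d) (Fin c) ℝ)
    (hU : Ustar = (1 / (n : ℝ)) • (B * Vᵀ)) :
    ∀ U : Matrix (Fin d) (Fin c) ℝ,
      frobSq (B - Ustar * V) ≤ frobSq (B - U * V) := by
  rw [hU, one_div]
  exact frobSq_sub_mul_le_of_mul_transpose_eq_zero
    (sub_inv_smul_mul_transpose_mul_mul_transpose_eq_zero (Nat.cast_ne_zero.mpr hn.ne') hV B)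
end

section
/- (Theorem 3, trace bound) Let n > 0 be a real number, let Λ be a real m × m diagonal matrix with nonnegative diagonal entries (Λ i j = 0 for i ≠ j and Λ i i ≥ 0), and let G be a real m × m matrix with G Gᵀ = n • I_m. Then trace(Λ G) ≤ √n · trace(Λ). -/
/-!
Since `Λ` is diagonal, `trace (Λ G) = ∑ i, Λᵢᵢ Gᵢᵢ`. Each row of `G` has squared norm `n`, so every
entry, in particular `Gᵢᵢ`, is at most `√n`; the weights `Λᵢᵢ` being nonnegative, the sum is at most
`√n ∑ i, Λᵢᵢ`.
-/

open Matrix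

namespace Matrix

variable {ι κ R : Type*}

theorem IsDiag.trace_mul [Fintype ι] [NonUnitalNonAssocSemiring R] {Λ : Matrix ι ι R}
    (hΛ : Λ.IsDiag) (A : Matrix ι ι R) : trace (Λ * A) = ∑ i, Λ i i * A i i := by
  classical
  conv_lhs => rw [← hΛ.diagonal_diag]
  simp [trace, diagonal_mul]

theorem IsDiag.trace_mul_le_mul_trace [Fintype ι] [CommSemiring R] [PartialOrder R]
    [IsOrderedRing R] {Λ A : Matrix ι ι R} (hΛ : Λ.IsDiag) (hΛ_nonneg : ∀ i, 0 ≤ Λ i i) {c : R}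
    (hA : ∀ i, A i i ≤ c) : trace (Λ * A) ≤ c * trace Λ := by
  rw [hΛ.trace_mul, trace, Finset.mul_sum]
  refine Finset.sum_le_sum fun i _ => ?_
  rw [mul_comm c]
  exact mul_le_mul_of_nonneg_left (hA i) (hΛ_nonneg i)

theorem sq_apply_le_mul_transpose_apply_self [Fintype κ] (A : Matrix ι κ ℝ) (i : ι) (j : κ) :
    A i j ^ 2 ≤ (A * Aᵀ) i i := by
  simp only [mul_apply, transpose_apply, ← sq]
  exact Finset.single_le_sum (fun k _ => sq_nonneg (A i k)) (Finset.mem_univ j)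

theorem apply_le_sqrt_of_mul_transpose_eq_smul_one [Fintype κ] [DecidableEq ι]
    {A : Matrix ι κ ℝ} {c : ℝ} (hA : A * Aᵀ = c • 1) (i : ι) (j : κ) : A i j ≤ √c :=
  (le_abs_self _).trans <| Real.abs_le_sqrt <| by
    simpa [hA] using sq_apply_le_mul_transpose_apply_self A i j

end Matrix

theorem trace_bound_of_scaled_orthogonal_general {m : ℕ}
    (n : ℝ)
    (Λ : Matrix (Fin m) (Fin m) ℝ)
    (hdiag : ∀ i j, i ≠ j → Λ i j = 0) (hpos : ∀ i, 0 ≤ Λ i i)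
    (G : Matrix (Fin m) (Fin m) ℝ)
    (hG : G * Gᵀ = n • (1 : Matrix (Fin m) (Fin m) ℝ)) :
    Matrix.trace (Λ * G) ≤ Real.sqrt n * Matrix.trace Λ :=
  IsDiag.trace_mul_le_mul_trace hdiag hpos fun i =>
    apply_le_sqrt_of_mul_transpose_eq_smul_one hG i i

theorem trace_bound_of_scaled_orthogonal {m : ℕ}
    (n : ℝ) (hn : 0 < n)
    (Λ : Matrix (Fin m) (Fin m) ℝ)
    (hdiag : ∀ i j, i ≠ j → Λ i j = 0) (hpos : ∀ i, 0 ≤ Λ i i)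
    (G : Matrix (Fin m) (Fin m) ℝ)
    (hG : G * Gᵀ = n • (1 : Matrix (Fin m) (Fin m) ℝ)) :
    Matrix.trace (Λ * G) ≤ Real.sqrt n * Matrix.trace Λ :=
  trace_bound_of_scaled_orthogonal_general n Λ hdiag hpos G hG
end

section
/- (Theorem 3, uniqueness of the maximizer) Let n > 0 be a real number, let Λ be a real m × m diagonal matrix with strictly positive diagonal entries (Λ i j = 0 for i ≠ j and Λ i i > 0), and let G be a real m × m matrix with G Gᵀ = n • I_m. If trace(Λ G) = √n · trace(Λ), then G = √n • I_m (i.e., G i i = √n for all i and G i j = 0 for all i ≠ j). -/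
/-!
Each row of `G` has squared norm `n`, so `G i i ≤ √n`. Since the weights `Λ i i` are positive,
`trace (Λ * G) = ∑ i, Λ i i * G i i` can only reach `√n * trace Λ` if every `G i i = √n`; a row
whose diagonal entry already carries the whole squared norm `n` vanishes off the diagonal.
-/

open Matrix

theorem Matrix.sum_sq_row_eq_of_mul_transpose_eq_smul_one {ι κ : Type*} [Fintype ι] [Fintype κ]
    [DecidableEq ι] {G : Matrix ι κ ℝ} {n : ℝ} (hG : G * Gᵀ = n • 1) (i : ι) :
    ∑ k, G i k ^ 2 = n := by
  simpa [mul_apply, sq] using congrFun (congrFun hG i) i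

theorem Matrix.trace_mul_of_isDiag {ι : Type*} [Fintype ι] [DecidableEq ι]
    {Λ : Matrix ι ι ℝ} (hΛ : Λ.IsDiag) (G : Matrix ι ι ℝ) :
    trace (Λ * G) = ∑ i, Λ i i * G i i := by
  conv_lhs => rw [← (isDiag_iff_diagonal_diag Λ).mp hΛ]
  simp only [trace, diag_apply, diagonal_mul]

theorem le_sqrt_of_sum_sq_eq {ι : Type*} [Fintype ι] {v : ι → ℝ} {n : ℝ}
    (hv : ∑ k, v k ^ 2 = n) (i : ι) : v i ≤ √n := by
  have hsq : v i ^ 2 ≤ n :=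
    hv ▸ Finset.single_le_sum (fun k _ => sq_nonneg (v k)) (Finset.mem_univ i)
  exact (le_abs_self _).trans (Real.abs_le_sqrt hsq)

theorem eq_zero_of_sum_sq_eq_of_eq_sqrt {ι : Type*} [Fintype ι] [DecidableEq ι] {v : ι → ℝ}
    {n : ℝ} (hv : ∑ k, v k ^ 2 = n) {i : ι} (hi : v i = √n) {j : ι} (hji : j ≠ i) :
    v j = 0 := by
  have hn : 0 ≤ n := hv ▸ Finset.sum_nonneg fun k _ => sq_nonneg (v k)
  have hrest : ∑ k ∈ Finset.univ.erase i, v k ^ 2 = 0 := by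
    have := Finset.add_sum_erase Finset.univ (fun k => v k ^ 2) (Finset.mem_univ i)
    rw [hi, Real.sq_sqrt hn, hv] at this
    linarith
  have hj : j ∈ Finset.univ.erase i := Finset.mem_erase.mpr ⟨hji, Finset.mem_univ j⟩
  exact pow_eq_zero_iff two_ne_zero |>.mp <|
    (Finset.sum_eq_zero_iff_of_nonneg fun k _ => sq_nonneg (v k)).mp hrest j hj

theorem Finset.eq_of_sum_mul_eq_mul_sum_of_le {ι : Type*} {s : Finset ι} {w a : ι → ℝ}
    {b : ℝ} (hw : ∀ i ∈ s, 0 < w i) (ha : ∀ i ∈ s, a i ≤ b)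
    (h : ∑ i ∈ s, w i * a i = b * ∑ i ∈ s, w i) : ∀ i ∈ s, a i = b := by
  rw [Finset.mul_sum] at h
  simp_rw [mul_comm b] at h
  intro i hi
  exact mul_left_cancel₀ (hw i hi).ne' <|
    (Finset.sum_eq_sum_iff_of_le fun i hi => mul_le_mul_of_nonneg_left (ha i hi) (hw i hi).le).mp
      h i hi

theorem trace_maximizer_unique_general {m : ℕ}
    (n : ℝ)
    (Λ : Matrix (Fin m) (Fin m) ℝ)
    (hdiag : ∀ i j, i ≠ j → Λ i j = 0) (hpos : ∀ i, 0 < Λ i i)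
    (G : Matrix (Fin m) (Fin m) ℝ)
    (hG : G * Gᵀ = n • (1 : Matrix (Fin m) (Fin m) ℝ))
    (hmax : Matrix.trace (Λ * G) = Real.sqrt n * Matrix.trace Λ) :
    G = Real.sqrt n • (1 : Matrix (Fin m) (Fin m) ℝ) := by
  have hrow := sum_sq_row_eq_of_mul_transpose_eq_smul_one hG
  rw [trace_mul_of_isDiag hdiag] at hmax
  have hdiagG : ∀ i, G i i = √n := fun i =>
    Finset.eq_of_sum_mul_eq_mul_sum_of_le (fun i _ => hpos i)
      (fun i _ => le_sqrt_of_sum_sq_eq (hrow i) i) hmax i (Finset.mem_univ i)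
  ext i j
  rcases eq_or_ne j i with rfl | hji
  · simp [hdiagG]
  · simp [one_apply_ne hji.symm, eq_zero_of_sum_sq_eq_of_eq_sqrt (hrow i) (hdiagG i) hji]

theorem trace_maximizer_unique {m : ℕ}
    (n : ℝ) (hn : 0 < n)
    (Λ : Matrix (Fin m) (Fin m) ℝ)
    (hdiag : ∀ i j, i ≠ j → Λ i j = 0) (hpos : ∀ i, 0 < Λ i i)
    (G : Matrix (Fin m) (Fin m) ℝ)
    (hG : G * Gᵀ = n • (1 : Matrix (Fin m) (Fin m) ℝ))
    (hmax : Matrix.trace (Λ * G) = Real.sqrt n * Matrix.trace Λ) :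
    G = Real.sqrt n • (1 : Matrix (Fin m) (Fin m) ℝ) :=
  trace_maximizer_unique_general n Λ hdiag hpos G hG hmax
end

section
/- (SVD-based trace bound for the Θ-subproblem) Let n be a positive natural number. Let P be a real c × c orthogonal matrix (Pᵀ P = I_c), let Q be a real n × c matrix with orthonormal columns (Qᵀ Q = I_c), let Λ be a real c × c diagonal matrix with nonnegative diagonal entries, and set C = P Λ Qᵀ (a c × n matrix). Then for every real c × n matrix Θ with Θ Θᵀ = n • I_c, trace(Θᵀ C) ≤ √n · trace(Λ). -/
/-!
Writing `C = P Λ Qᵀ` and cycling the trace gives `trace (Θᵀ C) = ∑ᵢ (Qᵀ Θᵀ P)ᵢᵢ Λᵢᵢ`.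
The columns of `Q` are unit vectors and, since `(Θᵀ P)ᵀ (Θᵀ P) = Pᵀ (n • 1) P = n • 1`, the columns
of `Θᵀ P` have length `√n`; so by Cauchy–Schwarz every `(Qᵀ Θᵀ P)ᵢᵢ ≤ √n`, and the weights `Λᵢᵢ`
are nonnegative.
-/

open Matrix

namespace Matrix

variable {k l m n : Type*}

theorem trace_mul_diagonal_le [Fintype n] [DecidableEq n] (M : Matrix n n ℝ) {d : n → ℝ}
    (hd : ∀ i, 0 ≤ d i) {b : ℝ} (hM : ∀ i, M i i ≤ b) :
    trace (M * diagonal d) ≤ b * ∑ i, d i := by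
  simp only [trace, diag_apply, mul_diagonal, Finset.mul_sum]
  exact Finset.sum_le_sum fun i _ => mul_le_mul_of_nonneg_right (hM i) (hd i)

theorem transpose_mul_apply_self_le_sqrt_mul_sqrt [Fintype m] (A B : Matrix m n ℝ) (i : n) :
    (Aᵀ * B) i i ≤ √((Aᵀ * A) i i) * √((Bᵀ * B) i i) := by
  simp only [mul_apply, transpose_apply, ← sq]
  exact Real.sum_mul_le_sqrt_mul_sqrt _ _ _

theorem transpose_mul_transpose_mul_eq_smul {R : Type*} [CommRing R] [Fintype k] [Fintype m]
    [DecidableEq k] [DecidableEq l] {X : Matrix k m R} {P : Matrix k l R} {s : R}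
    (hX : X * Xᵀ = s • 1) (hP : Pᵀ * P = 1) :
    (Xᵀ * P)ᵀ * (Xᵀ * P) = s • 1 := by
  rw [transpose_mul, transpose_transpose, Matrix.mul_assoc, ← Matrix.mul_assoc X, hX,
    smul_mul, Matrix.one_mul, Matrix.mul_smul, hP]

end Matrix

theorem svd_trace_bound_general {c n : ℕ}
    (P : Matrix (Fin c) (Fin c) ℝ) (hP : Pᵀ * P = (1 : Matrix (Fin c) (Fin c) ℝ))
    (Q : Matrix (Fin n) (Fin c) ℝ) (hQ : Qᵀ * Q = (1 : Matrix (Fin c) (Fin c) ℝ))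
    (Λ : Matrix (Fin c) (Fin c) ℝ)
    (hdiag : ∀ i j, i ≠ j → Λ i j = 0) (hpos : ∀ i, 0 ≤ Λ i i)
    (C : Matrix (Fin c) (Fin n) ℝ) (hC : C = P * Λ * Qᵀ) :
    ∀ Θ : Matrix (Fin c) (Fin n) ℝ,
      Θ * Θᵀ = (n : ℝ) • (1 : Matrix (Fin c) (Fin c) ℝ) →
      Matrix.trace (Θᵀ * C) ≤ Real.sqrt n * Matrix.trace Λ := by
  intro Θ hΘ
  have hΛ : diagonal Λ.diag = Λ := IsDiag.diagonal_diag hdiag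
  have hcorr : ∀ i, (Qᵀ * (Θᵀ * P)) i i ≤ √n := fun i =>
    calc (Qᵀ * (Θᵀ * P)) i i
        ≤ √((Qᵀ * Q) i i) * √(((Θᵀ * P)ᵀ * (Θᵀ * P)) i i) :=
          transpose_mul_apply_self_le_sqrt_mul_sqrt _ _ i
      _ = √n := by rw [hQ, transpose_mul_transpose_mul_eq_smul hΘ hP]; simp
  calc trace (Θᵀ * C) = trace (Qᵀ * (Θᵀ * P) * diagonal Λ.diag) := by
        rw [hC, hΛ, ← Matrix.mul_assoc, trace_mul_comm, Matrix.mul_assoc, Matrix.mul_assoc]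
    _ ≤ √n * trace Λ := trace_mul_diagonal_le _ hpos hcorr

theorem svd_trace_bound {c n : ℕ} (hn : 0 < n)
    (P : Matrix (Fin c) (Fin c) ℝ) (hP : Pᵀ * P = (1 : Matrix (Fin c) (Fin c) ℝ))
    (Q : Matrix (Fin n) (Fin c) ℝ) (hQ : Qᵀ * Q = (1 : Matrix (Fin c) (Fin c) ℝ))
    (Λ : Matrix (Fin c) (Fin c) ℝ)
    (hdiag : ∀ i j, i ≠ j → Λ i j = 0) (hpos : ∀ i, 0 ≤ Λ i i)
    (C : Matrix (Fin c) (Fin n) ℝ) (hC : C = P * Λ * Qᵀ) :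
    ∀ Θ : Matrix (Fin c) (Fin n) ℝ,
      Θ * Θᵀ = (n : ℝ) • (1 : Matrix (Fin c) (Fin c) ℝ) →
      Matrix.trace (Θᵀ * C) ≤ Real.sqrt n * Matrix.trace Λ :=
  svd_trace_bound_general P hP Q hQ Λ hdiag hpos C hC
end

section
/- (SVD-based maximizer of the Θ-subproblem) Let n be a positive natural number. Let P be a real c × c orthogonal matrix (Pᵀ P = I_c and P Pᵀ = I_c), let Q be a real n × c matrix with orthonormal columns (Qᵀ Q = I_c), let Λ be a real c × c diagonal matrix with nonnegative diagonal entries, and set C = P Λ Qᵀ. Then Θ* = √n • P Qᵀ satisfies the constraint Θ* Θ*ᵀ = n • I_c and achieves trace(Θ*ᵀ C) = √n · trace(Λ); hence Θ* maximizes trace(Θᵀ C) over all real c × n matrices Θ with Θ Θᵀ = n • I_c. -/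
open Matrix

/-! With `M = Qᵀ Θᵀ P`, cycling the trace gives `trace (Θᵀ C) = ∑ᵢ Mᵢᵢ Λᵢᵢ`. Each `Mᵢᵢ` pairs the
`i`-th column of `Q` (a unit vector) with the `i`-th row of `Pᵀ Θ` (of norm `√n`, since
`(Pᵀ Θ)(Pᵀ Θ)ᵀ = n • 1`), so `Mᵢᵢ ≤ √n` by Cauchy–Schwarz; as `Λᵢᵢ ≥ 0`, the trace is at most
`√n · trace Λ`, the value attained at `Θ*`. -/

namespace Matrix

variable {m n : Type*} [Fintype n]

theorem trace_mul_le_of_isDiag {M D : Matrix n n ℝ} (hD : D.IsDiag) (hD₀ : ∀ i, 0 ≤ D i i)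
    {b : ℝ} (hM : ∀ i, M i i ≤ b) : trace (M * D) ≤ b * trace D := by
  classical
  rw [← hD.diagonal_diag, trace_diagonal, Finset.mul_sum, trace]
  exact Finset.sum_le_sum fun i _ => by
    simpa using mul_le_mul_of_nonneg_right (hM i) (hD₀ i)

theorem mul_transpose_apply_self_le (A B : Matrix m n ℝ) (i : m) :
    (A * Bᵀ) i i ≤ √((A * Aᵀ) i i) * √((B * Bᵀ) i i) := by
  simpa only [mul_apply, transpose_apply, ← sq] using
    Real.sum_mul_le_sqrt_mul_sqrt Finset.univ (A i) (B i)

theorem mul_transpose_apply_self_le_sqrt [DecidableEq m] {A B : Matrix m n ℝ}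
    (hA : A * Aᵀ = 1) {a : ℝ} (hB : B * Bᵀ = a • 1) (i : m) : (A * Bᵀ) i i ≤ √a := by
  simpa [hA, hB] using mul_transpose_apply_self_le A B i

end Matrix

theorem svd_trace_maximizer_general {c n : ℕ}
    (P : Matrix (Fin c) (Fin c) ℝ)
    (hP : Pᵀ * P = (1 : Matrix (Fin c) (Fin c) ℝ))
    (hP' : P * Pᵀ = (1 : Matrix (Fin c) (Fin c) ℝ))
    (Q : Matrix (Fin n) (Fin c) ℝ) (hQ : Qᵀ * Q = (1 : Matrix (Fin c) (Fin c) ℝ))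
    (Λ : Matrix (Fin c) (Fin c) ℝ)
    (hdiag : ∀ i j, i ≠ j → Λ i j = 0) (hpos : ∀ i, 0 ≤ Λ i i)
    (C : Matrix (Fin c) (Fin n) ℝ) (hC : C = P * Λ * Qᵀ)
    (Θstar : Matrix (Fin c) (Fin n) ℝ)
    (hΘstar : Θstar = Real.sqrt n • (P * Qᵀ)) :
    Θstar * Θstarᵀ = (n : ℝ) • (1 : Matrix (Fin c) (Fin c) ℝ)
      ∧ Matrix.trace (Θstarᵀ * C) = Real.sqrt n * Matrix.trace Λ
      ∧ ∀ Θ : Matrix (Fin c) (Fin n) ℝ,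
          Θ * Θᵀ = (n : ℝ) • (1 : Matrix (Fin c) (Fin c) ℝ) →
          Matrix.trace (Θᵀ * C) ≤ Matrix.trace (Θstarᵀ * C) := by
  subst hC hΘstar
  have hvalue : trace ((√(n : ℝ) • (P * Qᵀ))ᵀ * (P * Λ * Qᵀ)) = √(n : ℝ) * trace Λ := by
    calc trace ((√(n : ℝ) • (P * Qᵀ))ᵀ * (P * Λ * Qᵀ))
        = √(n : ℝ) * trace (Q * (Pᵀ * P) * Λ * Qᵀ) := by
          simp only [transpose_smul, transpose_mul, transpose_transpose, smul_mul, trace_smul,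
            smul_eq_mul, Matrix.mul_assoc]
      _ = √(n : ℝ) * trace Λ := by rw [hP, Matrix.mul_one, trace_mul_cycle, hQ, Matrix.one_mul]
  refine ⟨?_, hvalue, fun Θ hΘ => ?_⟩
  · calc (√(n : ℝ) • (P * Qᵀ)) * (√(n : ℝ) • (P * Qᵀ))ᵀ
        = (√(n : ℝ) * √(n : ℝ)) • (P * (Qᵀ * Q) * Pᵀ) := by
          simp only [transpose_smul, transpose_mul, transpose_transpose, smul_mul, Matrix.mul_smul,
            smul_smul, Matrix.mul_assoc]
      _ = (n : ℝ) • 1 := by rw [hQ, Matrix.mul_one, hP', Real.mul_self_sqrt n.cast_nonneg]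
  have hrows : (Pᵀ * Θ) * (Pᵀ * Θ)ᵀ = (n : ℝ) • 1 := by
    rw [transpose_mul, transpose_transpose, Matrix.mul_assoc, ← Matrix.mul_assoc Θ, hΘ,
      smul_mul, Matrix.one_mul, Matrix.mul_smul, hP]
  have hdiagBound : ∀ i, (Qᵀ * (Pᵀ * Θ)ᵀ) i i ≤ √(n : ℝ) :=
    mul_transpose_apply_self_le_sqrt (by rwa [transpose_transpose]) hrows
  calc trace (Θᵀ * (P * Λ * Qᵀ)) = trace (Qᵀ * (Pᵀ * Θ)ᵀ * Λ) := by
        rw [transpose_mul, transpose_transpose, ← trace_mul_cycle, Matrix.mul_assoc,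
          Matrix.mul_assoc, Matrix.mul_assoc]
    _ ≤ √(n : ℝ) * trace Λ := trace_mul_le_of_isDiag hdiag hpos hdiagBound
    _ = _ := hvalue.symm

theorem svd_trace_maximizer {c n : ℕ} (hn : 0 < n)
    (P : Matrix (Fin c) (Fin c) ℝ)
    (hP : Pᵀ * P = (1 : Matrix (Fin c) (Fin c) ℝ))
    (hP' : P * Pᵀ = (1 : Matrix (Fin c) (Fin c) ℝ))
    (Q : Matrix (Fin n) (Fin c) ℝ) (hQ : Qᵀ * Q = (1 : Matrix (Fin c) (Fin c) ℝ))
    (Λ : Matrix (Fin c) (Fin c) ℝ)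
    (hdiag : ∀ i j, i ≠ j → Λ i j = 0) (hpos : ∀ i, 0 ≤ Λ i i)
    (C : Matrix (Fin c) (Fin n) ℝ) (hC : C = P * Λ * Qᵀ)
    (Θstar : Matrix (Fin c) (Fin n) ℝ)
    (hΘstar : Θstar = Real.sqrt n • (P * Qᵀ)) :
    Θstar * Θstarᵀ = (n : ℝ) • (1 : Matrix (Fin c) (Fin c) ℝ)
      ∧ Matrix.trace (Θstarᵀ * C) = Real.sqrt n * Matrix.trace Λ
      ∧ ∀ Θ : Matrix (Fin c) (Fin n) ℝ,
          Θ * Θᵀ = (n : ℝ) • (1 : Matrix (Fin c) (Fin c) ℝ) →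
          Matrix.trace (Θᵀ * C) ≤ Matrix.trace (Θstarᵀ * C) :=
  svd_trace_maximizer_general P hP hP' Q hQ Λ hdiag hpos C hC Θstar hΘstar
end
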